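/- arXiv:cs/0602040 — 3 statements merged into one kernel-verified Lean document; each statement's English description precedes it below -/
import Mathlib

section
/- If an execution σ of a fair transition system contains infinitely often two states s and s' that are related by a fair transition s →a s' belonging to a fairness constraint F_i, then some fair transition of F_i (with the same label a) occurs infinitely often in σ; hence σ is a computation with respect to F_i. -/
/-- Property 2.1: if an execution σ of a finite fair transition system
contains infinitely often two states s and s' related by a fair transition s →a s' of a
fairness constraint F (all of whose transitions carry the same label a, and which
satisfies condition (b)), then some fair transition of F (with label a) occurs infinitely
often in σ; hence σ is a computation with respect to F. -/
theorem stmt0 {S A : Type} [Finite S] [Finite A]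
    (Tr : Set (S × A × S)) (F : Set (S × A × S)) (a : A)
    -- F is a set of transitions of the system
    (hFsub : F ⊆ Tr)
    -- condition (a): all transitions of F share the same label a
    (ha : ∀ t ∈ F, t.2.1 = a)
    -- condition (b): every finite fragment of an execution from s to s', where
    -- s →a s' ∈ F, contains a transition of F
    (hb : ∀ s s', (s, a, s') ∈ F →
      ∀ (n : ℕ) (g : ℕ → S) (h : ℕ → A), 0 < n → g 0 = s → g n = s' →
        (∀ k < n, (g k, h k, g (k + 1)) ∈ Tr) →
        ∃ k < n, (g k, h k, g (k + 1)) ∈ F)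
    -- σ is an execution of the transition system
    (states : ℕ → S) (acts : ℕ → A)
    (hexec : ∀ n, (states n, acts n, states (n + 1)) ∈ Tr)
    -- s and s' are related by a fair transition of F and occur infinitely often in σ
    (s s' : S) (hF : (s, a, s') ∈ F)
    (hs : {n | states n = s}.Infinite)
    (hs' : {n | states n = s'}.Infinite) :
    (∃ u u', (u, a, u') ∈ F ∧
        {n | states n = u ∧ acts n = a ∧ states (n + 1) = u'}.Infinite) ∧
    -- hence σ satisfies the computation (fairness) requirement with respect to F
    ((∃ u, {n | states n = u}.Infinite ∧ ∃ b u', (u, b, u') ∈ F) →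
      ∃ t ∈ F, {n | (states n, acts n, states (n + 1)) = t}.Infinite) := by
  set f : ℕ → S × A × S := fun n => (states n, acts n, states (n + 1)) with hf
  have hT : {n | f n ∈ F}.Infinite := by
    apply Set.infinite_of_forall_exists_gt
    intro N
    obtain ⟨m, hm, hmN⟩ := hs.exists_gt N
    obtain ⟨m', hm', hmm'⟩ := hs'.exists_gt m
    obtain ⟨k, hk, hkF⟩ := hb s s' hF (m' - m) (fun k => states (m + k))
      (fun k => acts (m + k)) (by omega) (by simpa using hm)
      (by show states (m + (m' - m)) = s'; rw [Nat.add_sub_cancel' (le_of_lt hmm')]; exact hm')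
      (fun k _ => by simpa [Nat.add_assoc] using hexec (m + k))
    refine ⟨m + k, ?_, by omega⟩
    simpa [hf, Nat.add_assoc] using hkF
  have key : ∃ t ∈ F, {n | f n = t}.Infinite := by
    by_contra hcon
    push_neg at hcon
    have hsub : {n | f n ∈ F} ⊆ ⋃ t ∈ F, {n | f n = t} := by
      intro n hn; exact Set.mem_biUnion hn rfl
    have hfin : (⋃ t ∈ F, {n | f n = t}).Finite :=
      (Set.toFinite F).biUnion fun t ht => hcon t ht
    exact hT (hfin.subset hsub)
  obtain ⟨⟨u, b, u'⟩, htF, htInf⟩ := key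
  have hba : b = a := ha _ htF
  subst hba
  constructor
  · refine ⟨u, u', htF, ?_⟩
    convert htInf using 1
    ext n
    simp [hf, Prod.ext_iff, and_assoc]
  · intro _
    exact ⟨_, htF, htInf⟩
end

section
/- Condition (b) on a fairness constraint implies that for any execution σ, if a fair transition s →a s' ∈ F_i has both its source s and target s' occurring infinitely often in σ, then infinitely many transitions of F_i are taken in σ. -/
/-- condition (b) on a fairness constraint F implies that for any execution σ,
if a fair transition s →a s' ∈ F has both its source s and target s' occurring infinitely
often in σ, then infinitely many transitions of F are taken in σ. -/
theorem stmt1 {S A : Type}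
    (Tr : Set (S × A × S)) (F : Set (S × A × S))
    -- condition (b): every finite path fragment from s to s' (for any fair transition
    -- s →a s' ∈ F) passes through some transition of F
    (hb : ∀ s a s', (s, a, s') ∈ F →
      ∀ (n : ℕ) (g : ℕ → S) (h : ℕ → A), 0 < n → g 0 = s → g n = s' →
        (∀ k < n, (g k, h k, g (k + 1)) ∈ Tr) →
        ∃ k < n, (g k, h k, g (k + 1)) ∈ F)
    -- σ is an execution: an infinite sequence of consecutive transitions
    (states : ℕ → S) (acts : ℕ → A)
    (hexec : ∀ n, (states n, acts n, states (n + 1)) ∈ Tr)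
    -- a fair transition of F whose source and target occur infinitely often in σ
    (s : S) (a : A) (s' : S) (hF : (s, a, s') ∈ F)
    (hs : {n | states n = s}.Infinite)
    (hs' : {n | states n = s'}.Infinite) :
    {n | (states n, acts n, states (n + 1)) ∈ F}.Infinite := by
  apply Set.infinite_of_forall_exists_gt
  intro N
  obtain ⟨m, hm, hmN⟩ := hs.exists_gt N
  obtain ⟨m', hm', hmm'⟩ := hs'.exists_gt m
  obtain ⟨k, hk, hkF⟩ := hb s a s' hF (m' - m) (fun k => states (m + k))
    (fun k => acts (m + k)) (Nat.sub_pos_of_lt hmm') (by simpa using hm)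
    (by simpa [Nat.add_sub_cancel' hmm'.le] using hm')
    (fun k _ => hexec (m + k))
  exact ⟨m + k, hkF, lt_of_lt_of_le hmN (Nat.le_add_right m k)⟩
end

section
/- Let B ∈ 𝔅_mod be a Büchi automaton with initial state q₀ having a True-labelled self-loop, and let π = q₀ ⋯ q_{k-1} →p_{k-1} q_k →p_k q_{k+1} ⋯ be an accepting run on an execution σ, with k as in the defining condition of 𝔅_mod. Then for any finite sequence of states s'₀, …, s_{k-1} (of any length) ending at the state s_{k-1} of σ, the run that stays in q₀ along this prefix and then follows the suffix q_{k-1} →p_{k-1} q_k ⋯ of π is an accepting run on the execution obtained by prepending s'₀ ⋯ s_{k-1} to the suffix of σ starting at s_{k-1}. -/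
structure Buchi (S Q : Type) where
  q0 : Q
  trans : Q → (S → Prop) → Q → Prop
  acc : Set Q

/-- The class 𝔅_mod of Büchi automata. -/
def InBmod {S Q : Type} (B : Buchi S Q) : Prop :=
  B.trans B.q0 (fun _ => True) B.q0 ∧
  (∀ (ρ : ℕ → Q) (π : ℕ → (S → Prop)),
      ρ 0 = B.q0 → (∀ i, B.trans (ρ i) (π i) (ρ (i + 1))) →
      ∃ k, 0 < k ∧ (∀ i < k, ρ i = B.q0) ∧ (∀ i, k < i → ρ i ∈ B.acc)) ∧
  (∀ q p q', B.trans q p q' → q' ∈ B.acc →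
      ∃ p' q'', B.trans q' p' q'' ∧ ∀ s, p s → p' s)

/-- let `B ∈ 𝔅_mod`, and let `(ρ, π)` be an accepting run of `B` on the
execution `σ`, with index `k` as in the defining condition of 𝔅_mod.  Then for any
finite sequence of states `g 0, …, g m` ending at the state `σ (k-1)`, the run which
stays on `q₀` (via the True self-loop) along this prefix and then follows the suffix of
`(ρ, π)` from index `k-1` is an accepting run of `B` on the execution obtained by
prepending `g 0 ⋯ g m` to the suffix of `σ` starting at `σ (k-1)`. -/
theorem stmt8 {S Q : Type} (B : Buchi S Q) (hB : InBmod B)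
    (ρ : ℕ → Q) (π : ℕ → (S → Prop)) (σ : ℕ → S)
    (hρ0 : ρ 0 = B.q0) (hρ : ∀ i, B.trans (ρ i) (π i) (ρ (i + 1)))
    (hsat : ∀ i, π i (σ i)) (hacc : {i | ρ i ∈ B.acc}.Infinite)
    (k : ℕ) (hk : 0 < k) (hkq0 : ∀ i < k, ρ i = B.q0)
    (hkacc : ∀ i, k < i → ρ i ∈ B.acc)
    (m : ℕ) (g : ℕ → S) (hg : g m = σ (k - 1)) :
    let σ' : ℕ → S := fun i => if i < m then g i else σ (k - 1 + (i - m))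
    let ρ' : ℕ → Q := fun i => if i < m then B.q0 else ρ (k - 1 + (i - m))
    let π' : ℕ → (S → Prop) :=
      fun i => if i < m then (fun _ => True) else π (k - 1 + (i - m))
    ρ' 0 = B.q0 ∧ (∀ i, B.trans (ρ' i) (π' i) (ρ' (i + 1))) ∧
    (∀ i, π' i (σ' i)) ∧ {i | ρ' i ∈ B.acc}.Infinite := by
  intro σ' ρ' π'
  have hkk : ρ (k - 1) = B.q0 := hkq0 _ (Nat.sub_lt hk one_pos)
  refine ⟨?_, ?_, ?_, ?_⟩
  · simp only [ρ']
    split <;> simp [hkk]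
  · intro i
    simp only [ρ', π']
    rcases lt_trichotomy (i + 1) m with h | h | h
    · have : i < m := by omega
      simp [h, this, hB.1]
    · have hi : i < m := by omega
      have : ¬ i + 1 < m := by omega
      simp only [hi, this, if_pos, if_neg, if_true]
      have : k - 1 + (i + 1 - m) = k - 1 := by omega
      rw [this, hkk]
      exact hB.1
    · have hi : ¬ i < m := by omega
      have h1 : ¬ i + 1 < m := by omega
      simp only [hi, h1, if_neg]
      have : k - 1 + (i + 1 - m) = (k - 1 + (i - m)) + 1 := by omega
      rw [this]
      exact hρ _
  · intro i
    simp only [π', σ']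
    split
    · trivial
    · exact hsat _
  · apply Set.infinite_of_injective_forall_mem
      (f := fun n : ℕ => n + m + 2)
    · intro a b hab; simp only [Nat.add_left_inj] at hab; omega
    · intro n
      simp only [ρ', Set.mem_setOf_eq]
      have h1 : ¬ n + m + 2 < m := by omega
      rw [if_neg h1]
      exact hkacc _ (by omega)
end
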